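/- arXiv:1009.4482 — 2 statements merged into one kernel-verified Lean document; each statement's English description precedes it below -/
import Mathlib

section
/- Let μ_a < μ_b be small dominant weights of an irreducible reduced root system R. If α is a root with ⟨μ_a, α⟩ = 0 and ⟨μ_b, α⟩ ≠ 0, then ⟨μ, α⟩ = 0 for every dominant weight μ with μ ≤ μ_a. -/
/-!
Write `⟨ω, β∨⟩ ≤ 2` as `⟪ω, β⟫ ≤ ⟪β, β⟫`, and say that `ω` saturates `β` when equality holds.

If `ν ≤ ω` with `ν` dominant and `ω` small, then `ω - ν` is a sum of pairwise orthogonal positive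
roots, each saturated by `ω`: merge two summands with negative inner product into a positive root
until no such pair is left; then `⟪ω - ν, a⟫ ≤ ⟪a, a⟫` forces the summands to be orthogonal.

If a small `ω` saturates a positive root `s` and `⟪a, s⟫ < 0` for a positive root `a`, then
evaluating `ω` on the root `a + s` gives `⟪ω, a⟫ = 0`. Saturation therefore propagates from `μa` up
to `μb`: otherwise two summands `ρ₁, ρ₂` of `μb - μa` pair negatively with `s`, and `μb` saturates
`ρ₁ + s` while pairing positively with `ρ₂`. Finally, if `⟪μ, α⟫ > 0` for a positive root `α`, some
summand `σ` of `μa - μ` pairs negatively with `α`; `μa`, hence `μb`, saturates `σ`, so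
`⟪μb, α⟫ = 0`.
-/

open RealInnerProductSpace

noncomputable section

variable {E : Type*} [NormedAddCommGroup E] [InnerProductSpace ℝ E] [FiniteDimensional ℝ E]

/-- The coroot `α∨ = 2α/⟨α,α⟩` of a vector `α`. -/
def coroot (α : E) : E := (2 / ⟪α, α⟫) • α

/-- The orthogonal reflection across the hyperplane perpendicular to `α`. -/
def reflAt (α : E) : E ≃ₗᵢ[ℝ] E := Submodule.reflection (ℝ ∙ α)ᗮ

/-- An irreducible reduced crystallographic root system with a choice of positive roots. -/
structure IsRootSystem (R Rpos : Finset E) : Prop where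
  pos_subset : Rpos ⊆ R
  ne_zero : ∀ α ∈ R, α ≠ 0
  span_top : Submodule.span ℝ (R : Set E) = ⊤
  reduced : ∀ α ∈ R, ∀ c : ℝ, c • α ∈ (R : Set E) → c = 1 ∨ c = -1
  refl_mem : ∀ α ∈ R, ∀ β ∈ R, reflAt α β ∈ R
  cryst : ∀ α ∈ R, ∀ β ∈ R, ∃ k : ℤ, ⟪β, coroot α⟫ = (k : ℝ)
  pos_split : ∀ α ∈ R, Xor' (α ∈ Rpos) (-α ∈ Rpos)
  pos_closed : ∀ α ∈ Rpos, ∀ β ∈ Rpos, α + β ∈ R → α + β ∈ Rpos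
  irreducible : ∀ S : Finset E, S ⊆ R → S.Nonempty → S ≠ R →
    ∃ α ∈ S, ∃ β ∈ R, β ∉ S ∧ ⟪α, β⟫ ≠ 0

/-- The Weyl group: the subgroup of linear isometries generated by the root reflections. -/
def weylGroup (R : Finset E) : Subgroup (E ≃ₗᵢ[ℝ] E) :=
  Subgroup.closure (reflAt '' (R : Set E))

/-- A weight: an element with integral pairings against all coroots. -/
def IsWeight (R : Finset E) (x : E) : Prop := ∀ α ∈ R, ∃ k : ℤ, ⟪x, coroot α⟫ = (k : ℝ)

/-- Dominant: nonnegative pairing with all positive roots. -/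
def IsDominant (Rpos : Finset E) (x : E) : Prop := ∀ α ∈ Rpos, 0 ≤ ⟪x, α⟫

/-- Dominance order: `μ ≤ λ` iff `λ - μ` is a nonnegative integer combination of positive
roots, i.e. lies in the additive submonoid generated by the positive roots. -/
def domLE (Rpos : Finset E) (μ lam : E) : Prop :=
  lam - μ ∈ AddSubmonoid.closure (Rpos : Set E)

/-- Strict dominance order. -/
def domLT (Rpos : Finset E) (μ lam : E) : Prop := domLE Rpos μ lam ∧ μ ≠ lam

/-- A small weight: a dominant weight pairing at most `2` with every positive coroot. -/
def IsSmall (R Rpos : Finset E) (ω : E) : Prop :=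
  IsDominant Rpos ω ∧ IsWeight R ω ∧ ∀ α ∈ Rpos, ⟪ω, coroot α⟫ ≤ 2

/-- A minuscule weight: a nonzero dominant weight pairing at most `1` with every positive
coroot. -/
def IsMinuscule (R Rpos : Finset E) (ω : E) : Prop :=
  IsDominant Rpos ω ∧ IsWeight R ω ∧ ω ≠ 0 ∧ ∀ α ∈ Rpos, ⟪ω, coroot α⟫ ≤ 1

/-- The Weyl orbit of a point. -/
def weylOrbit (R : Finset E) (x : E) : Set E := {y | ∃ w ∈ weylGroup R, w x = y}

section RootSystem

omit [FiniteDimensional ℝ E]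

theorem inner_coroot (x γ : E) : ⟪x, coroot γ⟫ = 2 * ⟪x, γ⟫ / ⟪γ, γ⟫ := by
  rw [coroot, real_inner_smul_right]
  ring

theorem reflAt_apply (α β : E) : reflAt α β = β - ⟪β, coroot α⟫ • α := by
  rw [reflAt, Submodule.reflection_orthogonal_apply, Submodule.reflection_singleton_apply,
    inner_coroot, real_inner_comm]
  simp only [RCLike.ofReal_real_eq_id, id, ← real_inner_self_eq_norm_sq]
  module

theorem inner_multiset_sum (y : E) (m : Multiset E) : ⟪y, m.sum⟫ = (m.map (⟪y, ·⟫)).sum :=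
  map_multiset_sum (innerₛₗ ℝ y) m

theorem Multiset.exists_mem_inner_neg {y : E} {m : Multiset E} (h : ⟪y, m.sum⟫ < 0) :
    ∃ a ∈ m, ⟪y, a⟫ < 0 := by
  by_contra! hm
  rw [inner_multiset_sum] at h
  exact h.not_ge (Multiset.sum_nonneg fun r hr => by
    obtain ⟨a, ha, rfl⟩ := Multiset.mem_map.1 hr
    exact hm a ha)

variable {R Rpos : Finset E}

namespace IsRootSystem

variable (hRS : IsRootSystem R Rpos)
include hRS

theorem inner_self_pos {γ : E} (hγ : γ ∈ R) : 0 < ⟪γ, γ⟫ :=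
  real_inner_self_pos.2 (hRS.ne_zero γ hγ)

theorem inner_coroot_eq_neg_one_or_le_neg_two {γ δ : E} (hγ : γ ∈ R) (hδ : δ ∈ R)
    (h : ⟪γ, δ⟫ < 0) : ⟪δ, coroot γ⟫ = -1 ∨ ⟪δ, coroot γ⟫ ≤ -2 := by
  obtain ⟨k, hk⟩ := hRS.cryst γ hγ δ hδ
  have hneg : ⟪δ, coroot γ⟫ < 0 := by
    rw [inner_coroot, real_inner_comm]
    exact div_neg_of_neg_of_pos (by linarith) (hRS.inner_self_pos hγ)
  rw [hk] at hneg ⊢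
  have : k < 0 := by exact_mod_cast hneg
  rcases (by omega : k = -1 ∨ k ≤ -2) with rfl | hk2
  · left; norm_num
  · right; exact_mod_cast hk2

theorem two_mul_inner_le_neg_inner_self {γ δ : E} (hγ : γ ∈ R) (hδ : δ ∈ R)
    (h : ⟪γ, δ⟫ < 0) : 2 * ⟪γ, δ⟫ ≤ -⟪γ, γ⟫ := by
  have hle : ⟪δ, coroot γ⟫ ≤ -1 := by
    rcases hRS.inner_coroot_eq_neg_one_or_le_neg_two hγ hδ h with h1 | h2 <;> linarith
  rw [inner_coroot, div_le_iff₀ (hRS.inner_self_pos hγ), real_inner_comm] at hle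
  linarith

theorem add_mem_or_inner_le_neg_inner_self {γ δ : E} (hγ : γ ∈ R) (hδ : δ ∈ R)
    (h : ⟪γ, δ⟫ < 0) : γ + δ ∈ R ∨ ⟪γ, δ⟫ ≤ -⟪γ, γ⟫ := by
  rcases hRS.inner_coroot_eq_neg_one_or_le_neg_two hγ hδ h with h1 | h2
  · left
    have := hRS.refl_mem γ hγ δ hδ
    rwa [reflAt_apply, h1, neg_one_smul, sub_neg_eq_add, add_comm] at this
  · right
    rw [inner_coroot, div_le_iff₀ (hRS.inner_self_pos hγ), real_inner_comm] at h2
    linarith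

theorem add_mem_of_inner_neg {γ δ : E} (hγ : γ ∈ R) (hδ : δ ∈ R) (h : ⟪γ, δ⟫ < 0)
    (hne : γ + δ ≠ 0) : γ + δ ∈ R := by
  rcases hRS.add_mem_or_inner_le_neg_inner_self hγ hδ h with hmem | hγδ
  · exact hmem
  rcases hRS.add_mem_or_inner_le_neg_inner_self hδ hγ (by rwa [real_inner_comm]) with hmem | hδγ
  · rwa [add_comm]
  refine absurd (real_inner_self_nonpos.1 ?_) hne
  rw [real_inner_comm γ δ] at hδγ
  rw [real_inner_add_add_self]
  linarith

theorem add_mem_pos_of_inner_neg {a b : E} (ha : a ∈ Rpos) (hb : b ∈ Rpos) (h : ⟪a, b⟫ < 0) :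
    a + b ∈ Rpos := by
  refine hRS.pos_closed a ha b hb
    (hRS.add_mem_of_inner_neg (hRS.pos_subset ha) (hRS.pos_subset hb) h fun hab => ?_)
  rw [add_eq_zero_iff_eq_neg'] at hab
  subst hab
  rcases hRS.pos_split a (hRS.pos_subset ha) with ⟨-, h'⟩ | ⟨-, h'⟩
  exacts [h' hb, h' ha]

theorem exists_multiset_inner_nonneg [DecidableEq E] (m : Multiset E) (hm : ∀ γ ∈ m, γ ∈ Rpos) :
    ∃ m' : Multiset E, (∀ γ ∈ m', γ ∈ Rpos) ∧ m'.sum = m.sum ∧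
      ∀ a ∈ m', ∀ b ∈ m'.erase a, 0 ≤ ⟪a, b⟫ := by
  induction hn : Multiset.card m using Nat.strong_induction_on generalizing m with
  | _ n ih =>
    by_cases hgood : ∀ a ∈ m, ∀ b ∈ m.erase a, 0 ≤ ⟪a, b⟫
    · exact ⟨m, hm, rfl, hgood⟩
    push Not at hgood
    obtain ⟨a, ha, b, hb, hab⟩ := hgood
    obtain ⟨t, rfl⟩ : ∃ t, m = a ::ₘ b ::ₘ t :=
      ⟨(m.erase a).erase b, by rw [Multiset.cons_erase hb, Multiset.cons_erase ha]⟩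
    have hmerge : ∀ γ ∈ (a + b) ::ₘ t, γ ∈ Rpos := by
      simp only [Multiset.mem_cons, forall_eq_or_imp] at hm ⊢
      exact ⟨hRS.add_mem_pos_of_inner_neg hm.1 hm.2.1 hab, hm.2.2⟩
    obtain ⟨m', hm', hsum, hnonneg⟩ := ih _ (by simp [← hn]) _ hmerge rfl
    exact ⟨m', hm', by simp [hsum, add_assoc], hnonneg⟩

theorem exists_orthogonal_decomposition [DecidableEq E] {x : E}
    (hx : x ∈ AddSubmonoid.closure (Rpos : Set E)) (htight : ∀ β ∈ Rpos, ⟪x, β⟫ ≤ ⟪β, β⟫) :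
    ∃ m : Multiset E, (∀ γ ∈ m, γ ∈ Rpos) ∧ m.sum = x ∧
      ∀ a ∈ m, (∀ b ∈ m.erase a, ⟪a, b⟫ = 0) ∧ ⟪x, a⟫ = ⟪a, a⟫ := by
  obtain ⟨m₀, hm₀, rfl⟩ := AddSubmonoid.exists_multiset_of_mem_closure hx
  obtain ⟨m, hm, hsum, hnonneg⟩ := hRS.exists_multiset_inner_nonneg m₀ hm₀
  refine ⟨m, hm, hsum, fun a ha => ?_⟩
  have hsplit : ⟪a, m.sum⟫ = ⟪a, a⟫ + ((m.erase a).map (⟪a, ·⟫)).sum := by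
    rw [← Multiset.sum_erase ha, inner_add_right, inner_multiset_sum]
  have hrest : ∀ r ∈ (m.erase a).map (⟪a, ·⟫), 0 ≤ r := by
    simpa using hnonneg a ha
  have hle : ⟪a, m.sum⟫ ≤ ⟪a, a⟫ := by
    rw [real_inner_comm, hsum]
    exact htight a (hm a ha)
  have hrest_nonpos : ((m.erase a).map (⟪a, ·⟫)).sum ≤ 0 := by linarith
  refine ⟨fun b hb => le_antisymm ?_ (hnonneg a ha b hb), ?_⟩
  · exact (Multiset.single_le_sum hrest _ (Multiset.mem_map_of_mem _ hb)).trans hrest_nonpos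
  · rw [← hsum, real_inner_comm]
    linarith [Multiset.sum_nonneg hrest]

end IsRootSystem

namespace IsSmall

variable (hRS : IsRootSystem R Rpos)
include hRS

theorem inner_le_inner_self {ω β : E} (hω : IsSmall R Rpos ω) (hβ : β ∈ Rpos) :
    ⟪ω, β⟫ ≤ ⟪β, β⟫ := by
  have h := hω.2.2 β hβ
  rw [inner_coroot, div_le_iff₀ (hRS.inner_self_pos (hRS.pos_subset hβ))] at h
  linarith

theorem exists_orthogonal_decomposition_sub [DecidableEq E] {ω ν : E} (hω : IsSmall R Rpos ω)
    (hν : IsDominant Rpos ν) (hle : domLE Rpos ν ω) :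
    ∃ m : Multiset E, (∀ γ ∈ m, γ ∈ Rpos) ∧ m.sum = ω - ν ∧
      ∀ a ∈ m, (∀ b ∈ m.erase a, ⟪a, b⟫ = 0) ∧ ⟪ω, a⟫ = ⟪a, a⟫ := by
  obtain ⟨m, hm, hsum, hparts⟩ := hRS.exists_orthogonal_decomposition hle fun β hβ => by
    rw [inner_sub_left]
    linarith [hω.inner_le_inner_self hRS hβ, hν β hβ]
  refine ⟨m, hm, hsum, fun a ha => ⟨(hparts a ha).1, ?_⟩⟩
  have h := (hparts a ha).2
  rw [inner_sub_left] at h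
  linarith [hω.inner_le_inner_self hRS (hm a ha), hν a (hm a ha)]

theorem inner_eq_zero_of_inner_neg {ω a s : E} (hω : IsSmall R Rpos ω) (ha : a ∈ Rpos)
    (hs : s ∈ Rpos) (has : ⟪a, s⟫ < 0) (hωs : ⟪ω, s⟫ = ⟪s, s⟫) :
    ⟪ω, a⟫ = 0 ∧ 2 * ⟪a, s⟫ = -⟪a, a⟫ := by
  have hsum := hω.inner_le_inner_self hRS (hRS.add_mem_pos_of_inner_neg ha hs has)
  have hle := hRS.two_mul_inner_le_neg_inner_self (hRS.pos_subset ha) (hRS.pos_subset hs) has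
  have hωa := hω.1 a ha
  rw [inner_add_right, real_inner_add_add_self, hωs] at hsum
  constructor <;> linarith

theorem inner_eq_inner_self_of_domLE {μa μb σ : E} (ha : IsSmall R Rpos μa)
    (hb : IsSmall R Rpos μb) (hab : domLE Rpos μa μb) (hσ : σ ∈ Rpos)
    (hσa : ⟪μa, σ⟫ = ⟪σ, σ⟫) : ⟪μb, σ⟫ = ⟪σ, σ⟫ := by
  classical
  obtain ⟨m, hm, hsum, hparts⟩ := hb.exists_orthogonal_decomposition_sub hRS ha.1 hab
  refine le_antisymm (hb.inner_le_inner_self hRS hσ) (not_lt.1 fun hlt => ?_)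
  have hneg : ∀ ρ ∈ m, ⟪σ, ρ⟫ < 0 → ⟪μb, σ⟫ = 0 ∧ 2 * ⟪σ, ρ⟫ = -⟪σ, σ⟫ := fun ρ hρ h =>
    hb.inner_eq_zero_of_inner_neg hRS hσ (hm ρ hρ) h (hparts ρ hρ).2
  obtain ⟨ρ₁, hρ₁, h₁⟩ := Multiset.exists_mem_inner_neg (y := σ) (m := m) (by
    rw [hsum, inner_sub_right, real_inner_comm μb σ, real_inner_comm μa σ]
    linarith)
  obtain ⟨hbσ, h₁σ⟩ := hneg ρ₁ hρ₁ h₁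
  obtain ⟨ρ₂, hρ₂, h₂⟩ := Multiset.exists_mem_inner_neg (y := σ) (m := m.erase ρ₁) (by
    have h := congrArg (⟪σ, ·⟫) (Multiset.sum_erase hρ₁)
    rw [inner_add_right, hsum, inner_sub_right, real_inner_comm μb σ, real_inner_comm μa σ,
      hbσ, hσa] at h
    linarith [h, h₁σ, real_inner_self_nonneg (x := σ)])
  have hρ₂m : ρ₂ ∈ m := Multiset.mem_of_mem_erase hρ₂
  have hsat : ⟪μb, ρ₁ + σ⟫ = ⟪ρ₁ + σ, ρ₁ + σ⟫ := by
    rw [inner_add_right, real_inner_add_add_self, (hparts ρ₁ hρ₁).2, hbσ, real_inner_comm σ ρ₁]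
    linarith
  have hρ₂neg : ⟪ρ₂, ρ₁ + σ⟫ < 0 := by
    rw [inner_add_right, real_inner_comm ρ₁ ρ₂, (hparts ρ₁ hρ₁).1 ρ₂ hρ₂, real_inner_comm]
    linarith
  have hzero := (hb.inner_eq_zero_of_inner_neg hRS (hm ρ₂ hρ₂m)
    (hRS.add_mem_pos_of_inner_neg (hm ρ₁ hρ₁) hσ (by rwa [real_inner_comm])) hρ₂neg hsat).1
  rw [(hparts ρ₂ hρ₂m).2] at hzero
  exact (hRS.inner_self_pos (hRS.pos_subset (hm ρ₂ hρ₂m))).ne' hzero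

end IsSmall

end RootSystem

/-- if `μ_a < μ_b` are small weights and a root `α` is orthogonal to `μ_a`
but not to `μ_b`, then `α` is orthogonal to every dominant weight `μ ≤ μ_a`. -/
theorem root_orthogonal_to_all_below (R Rpos : Finset E) (hRS : IsRootSystem R Rpos)
    (μa μb : E) (ha : IsSmall R Rpos μa) (hb : IsSmall R Rpos μb)
    (hab : domLT Rpos μa μb)
    (α : E) (hα : α ∈ R) (h0 : ⟪μa, α⟫ = 0) (h1 : ⟪μb, α⟫ ≠ 0) :
    ∀ μ : E, IsDominant Rpos μ → IsWeight R μ → domLE Rpos μ μa → ⟪μ, α⟫ = 0 := by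
  classical
  intro μ hμ _ hμle
  suffices key : ∀ β ∈ Rpos, ⟪μa, β⟫ = 0 → ⟪μb, β⟫ ≠ 0 → ⟪μ, β⟫ = 0 by
    rcases hRS.pos_split α hα with ⟨hpos, -⟩ | ⟨hneg, -⟩
    · exact key α hpos h0 h1
    · simpa using key (-α) hneg (by simpa using h0) (by simpa using h1)
  intro β hβ hβa hβb
  refine le_antisymm (not_lt.1 fun hμβ => ?_) (hμ β hβ)
  obtain ⟨m, hm, hsum, hparts⟩ := ha.exists_orthogonal_decomposition_sub hRS hμ hμle
  obtain ⟨σ, hσ, hβσ⟩ := Multiset.exists_mem_inner_neg (y := β) (m := m) (by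
    rw [hsum, inner_sub_right, real_inner_comm μa β, real_inner_comm μ β, hβa]
    linarith)
  have hσb := ha.inner_eq_inner_self_of_domLE hRS hb hab.1 (hm σ hσ) (hparts σ hσ).2
  exact hβb (hb.inner_eq_zero_of_inner_neg hRS hβ (hm σ hσ) hβσ hσb).1

end
end

section
/- For the root systems of types A_n, B_n, C_n, and D_n, every fundamental weight ω_i satisfies ⟨ω_i, α₀∨⟩ ≤ 2, where α₀∨ is the highest coroot; i.e., all fundamental weights of the classical root systems are small. -/
open RealInnerProductSpace

noncomputable section

variable {E : Type*} [NormedAddCommGroup E] [InnerProductSpace ℝ E] [FiniteDimensional ℝ E]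

/-- The simple roots of type `B_n` in the standard coordinates. -/
def stdSimpleB (n : ℕ) (j : Fin n) : EuclideanSpace ℝ (Fin n) :=
  if h : (j : ℕ) + 1 < n then
    EuclideanSpace.single j 1 - EuclideanSpace.single ⟨(j : ℕ) + 1, h⟩ 1
  else EuclideanSpace.single j 1

/-- The simple roots of type `C_n` in the standard coordinates. -/
def stdSimpleC (n : ℕ) (j : Fin n) : EuclideanSpace ℝ (Fin n) :=
  if h : (j : ℕ) + 1 < n then
    EuclideanSpace.single j 1 - EuclideanSpace.single ⟨(j : ℕ) + 1, h⟩ 1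
  else (2 : ℝ) • EuclideanSpace.single j 1

/-- The simple roots of type `D_n` in the standard coordinates. -/
def stdSimpleD (n : ℕ) (j : Fin n) : EuclideanSpace ℝ (Fin n) :=
  if h : (j : ℕ) + 1 < n then
    EuclideanSpace.single j 1 - EuclideanSpace.single ⟨(j : ℕ) + 1, h⟩ 1
  else EuclideanSpace.single ⟨(j : ℕ) - 1, by omega⟩ 1 + EuclideanSpace.single j 1

/-! The pairings of `ω_i` with the simple roots `e_j - e_{j+1}` say that consecutive
coordinates of `ω_i` agree except for a drop by one after position `i`, so
`ω_i = c (1, …, 1) - (0, …, 0, 1, …, 1)`. In types B, C, D the pairing with the last simple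
root then fixes `c` (to `1/2` or `1`), and the pairing with the highest coroot (`e_0 - e_n`,
`2 e_0`, `e_0 + e_1`, `e_0 + e_1`) is read off from at most two coordinates. -/

lemma inner_coroot_s12 {F : Type*} [NormedAddCommGroup F] [InnerProductSpace ℝ F] (x α : F) :
    ⟪x, coroot α⟫ = 2 / ⟪α, α⟫ * ⟪x, α⟫ :=
  real_inner_smul_right x α _

def IsFundamentalWeight {ι : Type*} [DecidableEq ι] (α : ι → E) (i : ι) (ω : E) : Prop :=
  ∀ j, ⟪ω, coroot (α j)⟫ = if j = i then 1 else 0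

lemma eq_sub_ite_of_sub_succ_eq_ite {n : ℕ} (x : Fin n → ℝ) (i : ℕ)
    (h : ∀ j (hj : j + 1 < n), x ⟨j, by omega⟩ - x ⟨j + 1, hj⟩ = if j = i then 1 else 0) :
    ∀ k (hk : k < n), x ⟨k, hk⟩ = x ⟨0, by omega⟩ - if i < k then 1 else 0 := by
  intro k hk
  induction k with
  | zero => simp
  | succ k ih =>
    have hk' := h k hk
    rw [ih (by omega)] at hk'
    split_ifs at hk' ⊢ <;> first | omega | linarith

section StandardCoordinates

open EuclideanSpace

variable {n : ℕ}

def stdSimpleA (n : ℕ) (j : Fin n) : EuclideanSpace ℝ (Fin (n + 1)) :=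
  single j.castSucc 1 - single j.succ 1

lemma inner_single_one_right (x : EuclideanSpace ℝ (Fin n)) (i : Fin n) :
    ⟪x, single i (1 : ℝ)⟫ = x i := by
  simp [inner_single_right]

lemma inner_coroot_single_sub_single (x : EuclideanSpace ℝ (Fin n)) {i j : Fin n} (hij : i ≠ j) :
    ⟪x, coroot (single i (1 : ℝ) - single j 1)⟫ = x i - x j := by
  have hα : ⟪single i (1 : ℝ) - single j 1, single i 1 - single j 1⟫ = 2 := by
    simp only [inner_sub_left, inner_sub_right, inner_single_one_right, PiLp.single_apply,
      if_neg hij, if_neg hij.symm]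
    norm_num
  rw [inner_coroot_s12, hα, div_self two_ne_zero, one_mul, inner_sub_right, inner_single_one_right,
    inner_single_one_right]

lemma inner_coroot_single_add_single (x : EuclideanSpace ℝ (Fin n)) {i j : Fin n} (hij : i ≠ j) :
    ⟪x, coroot (single i (1 : ℝ) + single j 1)⟫ = x i + x j := by
  have hα : ⟪single i (1 : ℝ) + single j 1, single i 1 + single j 1⟫ = 2 := by
    simp only [inner_add_left, inner_add_right, inner_single_one_right, PiLp.single_apply,
      if_neg hij, if_neg hij.symm]
    norm_num
  rw [inner_coroot_s12, hα, div_self two_ne_zero, one_mul, inner_add_right, inner_single_one_right,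
    inner_single_one_right]

lemma inner_coroot_single (x : EuclideanSpace ℝ (Fin n)) (i : Fin n) :
    ⟪x, coroot (single i (1 : ℝ))⟫ = 2 * x i := by
  rw [inner_coroot_s12, inner_single_one_right, inner_single_one_right, PiLp.single_apply, if_pos rfl,
    div_one]

lemma inner_coroot_two_smul_single (x : EuclideanSpace ℝ (Fin n)) (i : Fin n) :
    ⟪x, coroot ((2 : ℝ) • single i (1 : ℝ))⟫ = x i := by
  rw [inner_coroot_s12, real_inner_smul_left, real_inner_smul_right, real_inner_smul_right,
    inner_single_one_right, inner_single_one_right, PiLp.single_apply, if_pos rfl]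
  ring

lemma IsFundamentalWeight.apply_eq_sub_ite {α : Fin n → EuclideanSpace ℝ (Fin n)}
    {i : Fin n} {ω : EuclideanSpace ℝ (Fin n)} (hω : IsFundamentalWeight α i ω)
    (hα : ∀ j (hj : j + 1 < n), α ⟨j, by omega⟩ = single ⟨j, by omega⟩ 1 - single ⟨j + 1, hj⟩ 1)
    (k : ℕ) (hk : k < n) : ω ⟨k, hk⟩ = ω ⟨0, by omega⟩ - if (i : ℕ) < k then 1 else 0 := by
  refine eq_sub_ite_of_sub_succ_eq_ite ω i (fun j hj => ?_) k hk
  rw [← inner_coroot_single_sub_single ω (by simp), ← hα j hj, hω]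
  simp [Fin.ext_iff]

theorem IsFundamentalWeight.inner_highestCoroot_typeA_eq_one {i : Fin n}
    {ω : EuclideanSpace ℝ (Fin (n + 1))} (hω : IsFundamentalWeight (stdSimpleA n) i ω) :
    ⟪ω, coroot (single (0 : Fin (n + 1)) (1 : ℝ) - single (Fin.last n) 1)⟫ = 1 := by
  have hn := i.pos
  have hcoord := eq_sub_ite_of_sub_succ_eq_ite ω i (fun j hj => by
    have hj' := hω ⟨j, by omega⟩
    rw [stdSimpleA, inner_coroot_single_sub_single ω Fin.castSucc_lt_succ.ne] at hj'
    simpa [Fin.ext_iff] using hj') n (by omega)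
  rw [inner_coroot_single_sub_single ω (by simp [Fin.ext_iff]; omega)]
  simp [Fin.last, hcoord]

theorem IsFundamentalWeight.inner_highestCoroot_typeB_le_two {i : Fin n}
    {ω : EuclideanSpace ℝ (Fin n)} (hω : IsFundamentalWeight (stdSimpleB n) i ω) :
    ⟪ω, coroot (single (⟨0, i.pos⟩ : Fin n) (1 : ℝ))⟫ ≤ 2 := by
  have hn := i.pos
  have hcoord := hω.apply_eq_sub_ite fun _ hj => dif_pos hj
  have hlast := hω ⟨n - 1, by omega⟩
  rw [stdSimpleB, dif_neg (show ¬(n - 1 + 1 < n) by omega), inner_coroot_single, hcoord] at hlast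
  rw [inner_coroot_single]
  simp only [Fin.ext_iff] at hlast
  have hi := i.isLt
  split_ifs at hlast <;> first | omega | linarith

theorem IsFundamentalWeight.inner_highestCoroot_typeC_le_two (hn : 2 ≤ n) {i : Fin n}
    {ω : EuclideanSpace ℝ (Fin n)} (hω : IsFundamentalWeight (stdSimpleC n) i ω) :
    ⟪ω, single (⟨0, zero_lt_two.trans_le hn⟩ : Fin n) (1 : ℝ) +
      single ⟨1, one_lt_two.trans_le hn⟩ 1⟫ ≤ 2 := by
  have hcoord := hω.apply_eq_sub_ite fun _ hj => dif_pos hj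
  have hlast := hω ⟨n - 1, by omega⟩
  rw [stdSimpleC, dif_neg (show ¬(n - 1 + 1 < n) by omega), inner_coroot_two_smul_single,
    hcoord] at hlast
  rw [inner_add_right, inner_single_one_right, inner_single_one_right, hcoord 1]
  simp only [Fin.ext_iff] at hlast
  have hi := i.isLt
  split_ifs at hlast ⊢ <;> first | omega | linarith

theorem IsFundamentalWeight.inner_highestCoroot_typeD_le_two (hn : 2 ≤ n) {i : Fin n}
    {ω : EuclideanSpace ℝ (Fin n)} (hω : IsFundamentalWeight (stdSimpleD n) i ω) :
    ⟪ω, single (⟨0, zero_lt_two.trans_le hn⟩ : Fin n) (1 : ℝ) +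
      single ⟨1, one_lt_two.trans_le hn⟩ 1⟫ ≤ 2 := by
  have hcoord := hω.apply_eq_sub_ite fun _ hj => dif_pos hj
  have hlast := hω ⟨n - 1, by omega⟩
  rw [stdSimpleD, dif_neg (show ¬(n - 1 + 1 < n) by omega),
    inner_coroot_single_add_single ω (by simp [Fin.ext_iff]; omega),
    hcoord (n - 1 - 1) (by omega), hcoord (n - 1) (by omega)] at hlast
  rw [inner_add_right, inner_single_one_right, inner_single_one_right, hcoord 1]
  simp only [Fin.ext_iff] at hlast
  have hi := i.isLt
  split_ifs at hlast ⊢ <;> first | omega | linarith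

end StandardCoordinates

/-- for the classical root systems `A_n`, `B_n`, `C_n`, `D_n`, every
fundamental weight `ω_i` pairs at most `2` with the highest coroot `α₀∨`. -/
theorem classical_fundamental_weights_small :
    (∀ (n : ℕ) (i : Fin n) (ω : EuclideanSpace ℝ (Fin (n + 1))),
      (∑ j, ω j = 0) →
      (∀ j : Fin n,
        ⟪ω, coroot (EuclideanSpace.single j.castSucc (1 : ℝ) -
            EuclideanSpace.single j.succ 1)⟫ = if j = i then 1 else 0) →
      ⟪ω, coroot (EuclideanSpace.single (0 : Fin (n + 1)) (1 : ℝ) -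
          EuclideanSpace.single (Fin.last n) 1)⟫ ≤ 2) ∧
    (∀ (n : ℕ) (hn : 2 ≤ n) (i : Fin n) (ω : EuclideanSpace ℝ (Fin n)),
      (∀ j : Fin n, ⟪ω, coroot (stdSimpleB n j)⟫ = if j = i then 1 else 0) →
      ⟪ω, coroot (EuclideanSpace.single (⟨0, by omega⟩ : Fin n) (1 : ℝ))⟫ ≤ 2) ∧
    (∀ (n : ℕ) (hn : 2 ≤ n) (i : Fin n) (ω : EuclideanSpace ℝ (Fin n)),
      (∀ j : Fin n, ⟪ω, coroot (stdSimpleC n j)⟫ = if j = i then 1 else 0) →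
      ⟪ω, EuclideanSpace.single (⟨0, by omega⟩ : Fin n) (1 : ℝ) +
          EuclideanSpace.single (⟨1, by omega⟩ : Fin n) 1⟫ ≤ 2) ∧
    (∀ (n : ℕ) (hn : 3 ≤ n) (i : Fin n) (ω : EuclideanSpace ℝ (Fin n)),
      (∀ j : Fin n, ⟪ω, coroot (stdSimpleD n j)⟫ = if j = i then 1 else 0) →
      ⟪ω, EuclideanSpace.single (⟨0, by omega⟩ : Fin n) (1 : ℝ) +
          EuclideanSpace.single (⟨1, by omega⟩ : Fin n) 1⟫ ≤ 2) := by
  exact ⟨fun _ _ _ _ hω => (IsFundamentalWeight.inner_highestCoroot_typeA_eq_one hω).trans_le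
      one_le_two,
    fun _ _ _ _ hω => IsFundamentalWeight.inner_highestCoroot_typeB_le_two hω,
    fun _ hn _ _ hω => IsFundamentalWeight.inner_highestCoroot_typeC_le_two (by omega) hω,
    fun _ hn _ _ hω => IsFundamentalWeight.inner_highestCoroot_typeD_le_two (by omega) hω⟩
end
end
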